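/- (Rural hospital theorem for responsive preferences) If μ and μ' are both stable matchings in a two-sided matching market with responsive hospital preferences, then every hospital is matched to the same number of doctors in μ and μ', i.e., |μ_h| = |μ'_h| for all hospitals h; consequently the distributions ξ(μ) and ξ(μ') coincide. -/

import Mathlib

open Finset

variable {D H : Type*} [Fintype D] [DecidableEq D] [Fintype H] [DecidableEq H]

/-- The hospital doctor `d` proposes to, given the set `A` of (doctor, hospital)
pairs `(d, h)` such that `h` has already rejected `d`.  Doctor preferences are
given by `pref d`, the list of `d`'s acceptable hospitals in order of strict
preference. -/
def propose (pref : D → List H) (A : Finset (D × H)) (d : D) : Option H :=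
  (pref d).find? (fun h => decide ((d, h) ∉ A))

/-- The set of doctors currently applying to hospital `h`. -/
def proposers (pref : D → List H) (A : Finset (D × H)) (h : H) : Finset D :=
  univ.filter (fun d => propose pref A d = some h)

/-- The (up to) `n` best doctors of `S` according to hospital `h`'s strict
priority order (lower `prio h` value means more preferred). -/
def topN (prio : H → D → ℕ) (h : H) (n : ℕ) (S : Finset D) : Finset D :=
  S.filter (fun d => (S.filter (fun d' => prio h d' < prio h d)).card < n)

/-- The doctors tentatively kept by hospital `h`: the best acceptable applicants,
up to the capacity `q h`. -/
def kept (pref : D → List H) (prio : H → D → ℕ) (acc : H → Finset D) (q : H → ℕ)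
    (A : Finset (D × H)) (h : H) : Finset D :=
  topN prio h (q h) (proposers pref A h ∩ acc h)

/-- One round of the doctor-proposing deferred acceptance algorithm, recorded via
the set of rejections so far: every applicant not tentatively kept is rejected. -/
def daStep (pref : D → List H) (prio : H → D → ℕ) (acc : H → Finset D) (q : H → ℕ)
    (A : Finset (D × H)) : Finset (D × H) :=
  A ∪ univ.filter (fun p : D × H =>
    propose pref A p.1 = some p.2 ∧ p.1 ∉ kept pref prio acc q A p.2)

/-- The outcome of the doctor-proposing deferred acceptance algorithm. -/
def daMatch (pref : D → List H) (prio : H → D → ℕ) (acc : H → Finset D) (q : H → ℕ)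
    (d : D) : Option H :=
  propose pref ((daStep pref prio acc q)^[Fintype.card D * Fintype.card H + 1] ∅) d

/-- The set of doctors matched to hospital `h` under matching `μ`. -/
def matchedSet (μ : D → Option H) (h : H) : Finset D :=
  univ.filter (fun d => μ d = some h)

/-- The rank of an outcome in doctor `d`'s preference list (smaller is better;
being unmatched ranks just below the least preferred acceptable hospital). -/
def rankOf (pref : D → List H) (d : D) : Option H → ℕ
  | none => (pref d).length
  | some h => (pref d).idxOf h

/-- Doctor `d` strictly prefers hospital `h` to outcome `o`. -/
def DPrefers (pref : D → List H) (d : D) (h : H) (o : Option H) : Prop :=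
  h ∈ pref d ∧ rankOf pref d (some h) < rankOf pref d o

/-- Individual rationality: nobody is matched with an unacceptable partner. -/
def IndivRat (pref : D → List H) (acc : H → Finset D) (μ : D → Option H) : Prop :=
  ∀ d h, μ d = some h → h ∈ pref d ∧ d ∈ acc h

/-- `(d, h)` is a blocking pair of `μ`. -/
def Blocks (pref : D → List H) (prio : H → D → ℕ) (acc : H → Finset D) (q : H → ℕ)
    (μ : D → Option H) (d : D) (h : H) : Prop :=
  DPrefers pref d h (μ d) ∧
    (((matchedSet μ h).card < q h ∧ d ∈ acc h) ∨
      ∃ d' ∈ matchedSet μ h, prio h d < prio h d')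

/-- Stability: individual rationality, capacities respected, and no blocking pair. -/
def IsStable (pref : D → List H) (prio : H → D → ℕ) (acc : H → Finset D) (q : H → ℕ)
    (μ : D → Option H) : Prop :=
  IndivRat pref acc μ ∧ (∀ h, (matchedSet μ h).card ≤ q h) ∧
    ∀ d h, ¬ Blocks pref prio acc q μ d h

/-!
Let `A` be a set of rejections that is a fixed point of the deferred-acceptance step and
contains no pair `(d, μ d)` of any stable matching `μ`; a maximal such set will do, because the
step preserves this property: a doctor is only rejected by a hospital holding `q h` better
applicants, one of whom lies outside `μ_h` and would block `μ` together with `h`.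
In the matching `ν` where every doctor holds her best unrejected hospital, each doctor matched
under `μ` is matched, while `|ν_h| ≤ |μ_h|` for every hospital, since otherwise a doctor of
`ν_h \ μ_h` blocks `μ` with `h`. Counting matched doctors forces `|ν_h| = |μ_h|`.
-/

theorem List.idxOf_le_idxOf_of_find?_eq_some {α : Type*} [DecidableEq α] {p : α → Bool}
    {l : List α} {a b : α} (hb : l.find? p = some b) (ha : a ∈ l) (hpa : p a) :
    l.idxOf b ≤ l.idxOf a := by
  induction l with
  | nil => simp at ha
  | cons c l ih =>
    by_cases hc : p c
    · obtain rfl : c = b := by simpa [List.find?_cons, hc] using hb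
      simp
    · have hac : a ≠ c := by rintro rfl; exact hc hpa
      rw [List.find?_cons_of_neg hc] at hb
      have hbc : b ≠ c := by rintro rfl; exact hc (List.find?_some hb)
      rw [List.idxOf_cons_ne _ hbc.symm, List.idxOf_cons_ne _ hac.symm]
      exact Nat.succ_le_succ (ih hb (List.mem_of_ne_of_mem hac ha))

theorem exists_map_eq_self_of_le_map {α : Type*} [PartialOrder α] [Finite α] {f : α → α}
    (hf : ∀ a, a ≤ f a) {P : α → Prop} (hP : ∀ a, P a → P (f a)) {a₀ : α} (h₀ : P a₀) :
    ∃ a, P a ∧ f a = a := by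
  obtain ⟨a, ha⟩ := (Set.toFinite {a | P a}).exists_maximal ⟨a₀, h₀⟩
  exact ⟨a, ha.prop, (ha.eq_of_le (hP a ha.prop) (hf a)).symm⟩

omit [Fintype D] [Fintype H] [DecidableEq H] in
theorem card_topN_le {prio : H → D → ℕ} {h : H} (hinj : Function.Injective (prio h)) (n : ℕ)
    (S : Finset D) : (topN prio h n S).card ≤ n := by
  by_contra! hn
  obtain ⟨d, hd, hmax⟩ := (topN prio h n S).exists_max_image (prio h)
    (Finset.card_pos.1 (by omega))
  -- every other kept doctor ranks strictly above the worst kept doctor `d`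
  have hsub : (topN prio h n S).erase d ⊆ S.filter (fun d' => prio h d' < prio h d) := by
    intro x hx
    obtain ⟨hxd, hx⟩ := Finset.mem_erase.1 hx
    exact Finset.mem_filter.2 ⟨(Finset.mem_filter.1 hx).1,
      lt_of_le_of_ne (hmax x hx) fun e => hxd (hinj e)⟩
  have := Finset.card_le_card hsub
  rw [Finset.card_erase_of_mem hd] at this
  have := (Finset.mem_filter.1 hd).2
  omega

section Propose

omit [Fintype D] [Fintype H]

variable {pref : D → List H} {A : Finset (D × H)} {d : D} {h : H}

theorem mem_of_propose_eq_some (hp : propose pref A d = some h) : h ∈ pref d :=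
  List.mem_of_find?_eq_some hp

theorem notMem_of_propose_eq_some (hp : propose pref A d = some h) : (d, h) ∉ A := by
  simpa using List.find?_some hp

theorem propose_isSome (hh : h ∈ pref d) (hA : (d, h) ∉ A) : (propose pref A d).isSome :=
  List.find?_isSome.2 ⟨h, hh, by simpa using hA⟩

theorem idxOf_le_of_propose_eq_some {b : H} (hb : propose pref A d = some b) (hh : h ∈ pref d)
    (hA : (d, h) ∉ A) : (pref d).idxOf b ≤ (pref d).idxOf h :=
  List.idxOf_le_idxOf_of_find?_eq_some hb hh (by simpa using hA)

theorem dPrefers_of_propose_eq_some {o : Option H} (hp : propose pref A d = some h)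
    (ho : ∀ h', o = some h' → h' ∈ pref d ∧ (d, h') ∉ A) (hne : o ≠ some h) :
    DPrefers pref d h o := by
  have hh := mem_of_propose_eq_some hp
  refine ⟨hh, ?_⟩
  cases o with
  | none => simpa [rankOf] using List.idxOf_lt_length_iff.2 hh
  | some h' =>
    obtain ⟨hh', hA⟩ := ho h' rfl
    have hle := idxOf_le_of_propose_eq_some hp hh' hA
    have hidx : (pref d).idxOf h ≠ (pref d).idxOf h' :=
      fun e => hne (congrArg some ((List.idxOf_inj hh).1 e).symm)
    simp only [rankOf]
    omega

end Propose

omit [DecidableEq D] in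
theorem sum_card_matchedSet (μ : D → Option H) :
    ∑ h, (matchedSet μ h).card = #{d | (μ d).isSome} := by
  simp only [matchedSet, Finset.card_filter]
  rw [Finset.sum_comm]
  refine Finset.sum_congr rfl fun d _ => ?_
  cases μ d <;> simp

section DeferredAcceptance

variable {pref : D → List H} {prio : H → D → ℕ} {acc : H → Finset D} {q : H → ℕ}
  {A : Finset (D × H)} {μ : D → Option H}

theorem mem_kept_of_daStep_eq (hfix : daStep pref prio acc q A = A) {d : D} {h : H}
    (hp : propose pref A d = some h) : d ∈ kept pref prio acc q A h := by
  by_contra hk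
  have hmem : (d, h) ∈ daStep pref prio acc q A :=
    Finset.mem_union_right _ (Finset.mem_filter.2 ⟨Finset.mem_univ _, hp, hk⟩)
  exact notMem_of_propose_eq_some hp (hfix ▸ hmem)

theorem notMem_daStep_of_isStable (hμ : IsStable pref prio acc q μ)
    (hAμ : ∀ d h, μ d = some h → (d, h) ∉ A) {d : D} {h : H} (hdh : μ d = some h) :
    (d, h) ∉ daStep pref prio acc q A := by
  intro hmem
  rcases Finset.mem_union.1 hmem with hold | hnew
  · exact hAμ d h hdh hold
  obtain ⟨-, hp, hk⟩ := Finset.mem_filter.1 hnew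
  set S := proposers pref A h ∩ acc h
  set T := S.filter (fun d' => prio h d' < prio h d)
  have hdS : d ∈ S := Finset.mem_inter.2 ⟨by simpa [proposers] using hp, (hμ.1 d h hdh).2⟩
  have hqT : q h ≤ T.card := by
    by_contra! hlt
    exact hk (Finset.mem_filter.2 ⟨hdS, hlt⟩)
  have hdM : d ∈ matchedSet μ h := by simpa [matchedSet] using hdh
  obtain ⟨d', hd'T, hd'M⟩ : ∃ d' ∈ T, d' ∉ matchedSet μ h := by
    by_contra! hTM
    have hssub : T ⊂ matchedSet μ h :=
      (Finset.ssubset_iff_of_subset hTM).2 ⟨d, hdM, by simp [T]⟩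
    have := Finset.card_lt_card hssub
    have := hμ.2.1 h
    omega
  obtain ⟨hd'S, hd'd⟩ := Finset.mem_filter.1 hd'T
  have hp' : propose pref A d' = some h := by simpa [proposers] using (Finset.mem_inter.1 hd'S).1
  have hpref : DPrefers pref d' h (μ d') :=
    dPrefers_of_propose_eq_some hp' (fun h' hh' => ⟨(hμ.1 d' h' hh').1, hAμ d' h' hh'⟩)
      (by simpa [matchedSet] using hd'M)
  exact hμ.2.2 d' h ⟨hpref, Or.inr ⟨d, hdM, hd'd⟩⟩

theorem exists_daStep_eq_self_avoiding_isStable (pref : D → List H) (prio : H → D → ℕ)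
    (acc : H → Finset D) (q : H → ℕ) :
    ∃ A, (∀ μ, IsStable pref prio acc q μ → ∀ d h, μ d = some h → (d, h) ∉ A) ∧
      daStep pref prio acc q A = A :=
  exists_map_eq_self_of_le_map (fun _ => Finset.subset_union_left)
    (fun _ hA μ hμ _ _ hdh => notMem_daStep_of_isStable hμ (hA μ hμ) hdh)
    (fun _ _ _ _ _ => Finset.notMem_empty _)

theorem card_matchedSet_propose_le_capacity {h : H} (hinj : Function.Injective (prio h))
    (hfix : daStep pref prio acc q A = A) :
    (matchedSet (propose pref A) h).card ≤ q h :=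
  (Finset.card_le_card fun _ hd => mem_kept_of_daStep_eq hfix (Finset.mem_filter.1 hd).2).trans
    (card_topN_le hinj _ _)

theorem card_matchedSet_propose_le {h : H} (hinj : Function.Injective (prio h))
    (hfix : daStep pref prio acc q A = A) (hμ : IsStable pref prio acc q μ)
    (hAμ : ∀ d h, μ d = some h → (d, h) ∉ A) :
    (matchedSet (propose pref A) h).card ≤ (matchedSet μ h).card := by
  by_contra! hlt
  obtain ⟨d, hdν, hdμ⟩ := Finset.exists_mem_notMem_of_card_lt_card hlt
  have hp : propose pref A d = some h := (Finset.mem_filter.1 hdν).2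
  have hacc : d ∈ acc h :=
    (Finset.mem_inter.1 (Finset.mem_filter.1 (mem_kept_of_daStep_eq hfix hp)).1).2
  have hpref : DPrefers pref d h (μ d) :=
    dPrefers_of_propose_eq_some hp (fun h' hh' => ⟨(hμ.1 d h' hh').1, hAμ d h' hh'⟩)
      (by simpa [matchedSet] using hdμ)
  exact hμ.2.2 d h
    ⟨hpref, Or.inl ⟨hlt.trans_le (card_matchedSet_propose_le_capacity hinj hfix), hacc⟩⟩

theorem card_matchedSet_propose_eq (hinj : ∀ h, Function.Injective (prio h))
    (hfix : daStep pref prio acc q A = A) (hμ : IsStable pref prio acc q μ)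
    (hAμ : ∀ d h, μ d = some h → (d, h) ∉ A) (h : H) :
    (matchedSet (propose pref A) h).card = (matchedSet μ h).card := by
  have hle h := card_matchedSet_propose_le (hinj h) hfix hμ hAμ
  have hsum : ∑ h, (matchedSet μ h).card ≤ ∑ h, (matchedSet (propose pref A) h).card := by
    rw [sum_card_matchedSet, sum_card_matchedSet]
    refine Finset.card_le_card fun d hd => ?_
    obtain ⟨h', hh'⟩ := Option.isSome_iff_exists.1 (Finset.mem_filter.1 hd).2
    exact Finset.mem_filter.2 ⟨mem_univ d, propose_isSome (hμ.1 d h' hh').1 (hAμ d h' hh')⟩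
  exact (Finset.sum_eq_sum_iff_of_le fun h _ => hle h).1
    ((Finset.sum_le_sum fun h _ => hle h).antisymm hsum) h (mem_univ h)

end DeferredAcceptance

theorem rural_hospital_general (pref : D → List H) (prio : H → D → ℕ) (acc : H → Finset D)
    (q : H → ℕ) (hinj : ∀ h, Function.Injective (prio h))
    (μ μ' : D → Option H) (hμ : IsStable pref prio acc q μ)
    (hμ' : IsStable pref prio acc q μ') :
    ∀ h, (matchedSet μ h).card = (matchedSet μ' h).card := by
  obtain ⟨A, hAstable, hfix⟩ := exists_daStep_eq_self_avoiding_isStable pref prio acc q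
  intro h
  rw [← card_matchedSet_propose_eq hinj hfix hμ (hAstable μ hμ) h,
    card_matchedSet_propose_eq hinj hfix hμ' (hAstable μ' hμ') h]

/-- rural hospital theorem: any two stable matchings assign the same
number of doctors to each hospital, so their distributions coincide. -/
theorem rural_hospital (pref : D → List H) (prio : H → D → ℕ) (acc : H → Finset D)
    (q : H → ℕ) (hinj : ∀ h, Function.Injective (prio h))
    (hnd : ∀ d, (pref d).Nodup)
    (hcons : ∀ h d d', prio h d < prio h d' → d' ∈ acc h → d ∈ acc h)
    (μ μ' : D → Option H) (hμ : IsStable pref prio acc q μ)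
    (hμ' : IsStable pref prio acc q μ') :
    ∀ h, (matchedSet μ h).card = (matchedSet μ' h).card :=
  rural_hospital_general pref prio acc q hinj μ μ' hμ hμ'
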